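/- The Motzkin form M(x,y,z) = x⁴y² + x²y⁴ + z⁶ − 3x²y²z² is positive semidefinite but is not a sum of squares of polynomials. -/

import Mathlib

open MvPolynomial

/-- A real polynomial is a sum of squares (sos) if it equals a finite sum of squares
of real polynomials. -/
def IsSos {n : ℕ} (p : MvPolynomial (Fin n) ℝ) : Prop :=
  ∃ (k : ℕ) (g : Fin k → MvPolynomial (Fin n) ℝ), p = ∑ i, g i ^ 2

/-- A real polynomial is positive semidefinite (psd) if it takes nonnegative values
at every real point. -/
def Psd {n : ℕ} (p : MvPolynomial (Fin n) ℝ) : Prop :=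
  ∀ x : Fin n → ℝ, 0 ≤ eval x p

/-- The Motzkin form M(x,y,z) = x⁴y² + x²y⁴ + z⁶ − 3x²y²z². -/
noncomputable def Motzkin : MvPolynomial (Fin 3) ℝ :=
  X 0 ^ 4 * X 1 ^ 2 + X 0 ^ 2 * X 1 ^ 4 + X 2 ^ 6 - 3 * (X 0 ^ 2 * X 1 ^ 2 * X 2 ^ 2)

noncomputable def E (a b c : ℕ) : Fin 3 →₀ ℕ := Finsupp.equivFunOnFinite.symm ![a,b,c]

@[simp] lemma E_apply0 (a b c : ℕ) : E a b c 0 = a := rfl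
@[simp] lemma E_apply1 (a b c : ℕ) : E a b c 1 = b := rfl
@[simp] lemma E_apply2 (a b c : ℕ) : E a b c 2 = c := rfl

@[simp] lemma E_eq_iff {a b c a' b' c' : ℕ} : E a b c = E a' b' c' ↔ a = a' ∧ b = b' ∧ c = c' := by
  constructor
  · intro h
    exact ⟨DFunLike.congr_fun h 0, DFunLike.congr_fun h 1, DFunLike.congr_fun h 2⟩
  · rintro ⟨rfl, rfl, rfl⟩; rfl

lemma eq_E (β : Fin 3 →₀ ℕ) : β = E (β 0) (β 1) (β 2) := by
  ext i; fin_cases i <;> rfl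

lemma E_add (a b c a' b' c' : ℕ) : E a b c + E a' b' c' = E (a+a') (b+b') (c+c') := by
  ext i; fin_cases i <;> rfl

lemma degf_eq (β : Fin 3 →₀ ℕ) : (β.sum fun _ n => n) = β 0 + β 1 + β 2 := by
  rw [Finsupp.sum_fintype]
  · exact Fin.sum_univ_three _
  · intro; rfl

lemma motzkin_eq : Motzkin = monomial (E 4 2 0) 1 + monomial (E 2 4 0) 1
    + monomial (E 0 0 6) 1 + monomial (E 2 2 2) (-3) := by
  have h1 : E 4 2 0 = Finsupp.single 0 4 + Finsupp.single 1 2 := by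
    ext i; fin_cases i <;> simp [E]
  have h2 : E 2 4 0 = Finsupp.single 0 2 + Finsupp.single 1 4 := by
    ext i; fin_cases i <;> simp [E]
  have h3 : (E 0 0 6 : Fin 3 →₀ ℕ) = Finsupp.single 2 6 := by
    ext i; fin_cases i <;> simp [E]
  have h4 : E 2 2 2 = Finsupp.single 0 2 + Finsupp.single 1 2 + Finsupp.single 2 2 := by
    ext i; fin_cases i <;> simp [E]
  rw [Motzkin, show (3 : MvPolynomial (Fin 3) ℝ) = C 3 from (map_ofNat C 3).symm,
    h1, h2, h3, h4]
  simp [X_pow_eq_monomial, monomial_mul, C_mul_monomial]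
  ring

lemma deg3_of_ne {g : MvPolynomial (Fin 3) ℝ} (hd : g.totalDegree ≤ 3) {β : Fin 3 →₀ ℕ}
    (h : coeff β g ≠ 0) : β 0 + β 1 + β 2 ≤ 3 := by
  by_contra hlt
  refine h (coeff_eq_zero_of_totalDegree_lt ?_)
  have : (∑ i ∈ β.support, β i) = β 0 + β 1 + β 2 := degf_eq β
  omega

lemma coeff_M (a b c : ℕ) : coeff (E a b c) Motzkin =
    (if a = 4 ∧ b = 2 ∧ c = 0 then 1 else 0) + (if a = 2 ∧ b = 4 ∧ c = 0 then 1 else 0)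
    + (if a = 0 ∧ b = 0 ∧ c = 6 then 1 else 0) + (if a = 2 ∧ b = 2 ∧ c = 2 then (-3) else 0) := by
  rw [motzkin_eq]
  simp only [coeff_add, coeff_monomial, E_eq_iff]
  split_ifs <;> first | rfl | omega

lemma diag_step {k : ℕ} {g : Fin k → MvPolynomial (Fin 3) ℝ}
    (hs : ∑ i, g i ^ 2 = Motzkin) (hd : ∀ i, (g i).totalDegree ≤ 3)
    {a b c : ℕ} (h3 : a + b + c = 3)
    (hside : ∀ i, ∀ β γ : Fin 3 →₀ ℕ,
      β 0 + γ 0 = 2*a → β 1 + γ 1 = 2*b → β 2 + γ 2 = 2*c →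
      β 0 + β 1 + β 2 = 3 → γ 0 + γ 1 + γ 2 = 3 →
      β ≠ E a b c →
      coeff β (g i) * coeff γ (g i) = 0) :
    coeff (E (2*a) (2*b) (2*c)) Motzkin = ∑ i, (coeff (E a b c) (g i))^2 := by
  rw [← hs, coeff_sum]
  refine Finset.sum_congr rfl fun i _ => ?_
  rw [sq, coeff_mul]
  rw [Finset.sum_eq_single_of_mem (E a b c, E a b c)]
  · rw [sq]
  · rw [Finset.HasAntidiagonal.mem_antidiagonal, E_add, E_eq_iff]; omega
  · rintro ⟨β, γ⟩ hmem hne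
    have hadd : β + γ = E (2*a) (2*b) (2*c) := Finset.HasAntidiagonal.mem_antidiagonal.mp hmem
    have e0 : β 0 + γ 0 = 2*a := by
      have := DFunLike.congr_fun hadd 0; simpa [Finsupp.add_apply] using this
    have e1 : β 1 + γ 1 = 2*b := by
      have := DFunLike.congr_fun hadd 1; simpa [Finsupp.add_apply] using this
    have e2 : β 2 + γ 2 = 2*c := by
      have := DFunLike.congr_fun hadd 2; simpa [Finsupp.add_apply] using this
    by_cases hβ0 : coeff β (g i) = 0
    · simp [hβ0]
    by_cases hγ0 : coeff γ (g i) = 0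
    · simp [hγ0]
    have hb := deg3_of_ne (hd i) hβ0
    have hg := deg3_of_ne (hd i) hγ0
    refine hside i β γ e0 e1 e2 (by omega) (by omega) ?_
    intro hβE
    apply hne
    have hγE : γ = E a b c := by
      have h := eq_E γ
      have v0 : β 0 = a := by rw [hβE]; rfl
      have v1 : β 1 = b := by rw [hβE]; rfl
      have v2 : β 2 = c := by rw [hβE]; rfl
      rw [show γ 0 = a by omega, show γ 1 = b by omega, show γ 2 = c by omega] at h
      exact h
    rw [hβE, hγE]

lemma step_zero {k : ℕ} {g : Fin k → MvPolynomial (Fin 3) ℝ}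
    (hs : ∑ i, g i ^ 2 = Motzkin) (hd : ∀ i, (g i).totalDegree ≤ 3)
    {a b c : ℕ} (h3 : a + b + c = 3)
    (hM : coeff (E (2*a) (2*b) (2*c)) Motzkin = 0)
    (hside : ∀ i, ∀ β γ : Fin 3 →₀ ℕ,
      β 0 + γ 0 = 2*a → β 1 + γ 1 = 2*b → β 2 + γ 2 = 2*c →
      β 0 + β 1 + β 2 = 3 → γ 0 + γ 1 + γ 2 = 3 →
      β ≠ E a b c →
      coeff β (g i) * coeff γ (g i) = 0) :
    ∀ i, coeff (E a b c) (g i) = 0 := by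
  have h := diag_step hs hd h3 hside
  rw [hM] at h
  intro i
  have := (Finset.sum_eq_zero_iff_of_nonneg (fun j _ => sq_nonneg _)).mp h.symm i (Finset.mem_univ i)
  exact pow_eq_zero_iff (by norm_num) |>.mp this

lemma coeff_M_ne {β : Fin 3 →₀ ℕ} (h : β 0 + β 1 + β 2 ≠ 6) : coeff β Motzkin = 0 := by
  conv_lhs => rw [eq_E β]
  rw [coeff_M]
  split_ifs <;> first | (exfalso; omega) | norm_num

lemma deg_le {k : ℕ} {g : Fin k → MvPolynomial (Fin 3) ℝ}
    (hs : ∑ i, g i ^ 2 = Motzkin) : ∀ i, (g i).totalDegree ≤ 3 := by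
  by_contra hcon
  push_neg at hcon
  obtain ⟨i₀, hi₀⟩ := hcon
  set D := Finset.univ.sup (fun i => (g i).totalDegree) with hD
  have hD4 : 4 ≤ D := by
    have h : (g i₀).totalDegree ≤ D := by
      rw [hD]; exact Finset.le_sup (f := fun i => (g i).totalDegree) (Finset.mem_univ i₀)
    omega
  set S : Finset (Fin 3 →₀ ℕ) :=
    (Finset.univ.biUnion fun i => (g i).support).filter (fun β => β 0 + β 1 + β 2 = D) with hS
  have hSne : S.Nonempty := by
    obtain ⟨i₁, -, hi₁⟩ := Finset.exists_mem_eq_sup Finset.univ ⟨i₀, Finset.mem_univ i₀⟩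
      (fun i => (g i).totalDegree)
    have hne : g i₁ ≠ 0 := by
      intro h0
      rw [h0, totalDegree_zero] at hi₁
      omega
    obtain ⟨β, hβmem, hβeq⟩ := Finset.exists_mem_eq_sup (g i₁).support
      (Finset.nonempty_of_ne_empty (mt support_eq_empty.mp hne)) (fun s => s.sum fun _ e => e)
    refine ⟨β, Finset.mem_filter.mpr ⟨Finset.mem_biUnion.mpr ⟨i₁, Finset.mem_univ _, hβmem⟩, ?_⟩⟩
    have h1 : (β.sum fun _ n => n) = β 0 + β 1 + β 2 := degf_eq β
    have h2 : (g i₁).totalDegree = β.sum fun _ e => e := hβeq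
    omega
  obtain ⟨β₀, hβ₀S, hβ₀⟩ := Finset.exists_mem_eq_sup S hSne (fun β => β 0)
  set S1 := S.filter (fun β => β 0 = S.sup (fun β => β 0)) with hS1
  obtain ⟨B, hBS1, hB1⟩ := Finset.exists_mem_eq_sup S1
    ⟨β₀, Finset.mem_filter.mpr ⟨hβ₀S, hβ₀.symm⟩⟩ (fun β => β 1)
  have hBS : B ∈ S := (Finset.mem_filter.mp hBS1).1
  have hBm0 : B 0 = S.sup (fun β => β 0) := (Finset.mem_filter.mp hBS1).2
  obtain ⟨hBbi, hBdeg⟩ := Finset.mem_filter.mp hBS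
  obtain ⟨i₂, -, hi₂mem⟩ := Finset.mem_biUnion.mp hBbi
  have hc2 : coeff B (g i₂) ≠ 0 := mem_support_iff.mp hi₂mem
  have hM0 : coeff (B + B) Motzkin = 0 := by
    apply coeff_M_ne
    have e0 : (B + B) 0 = B 0 + B 0 := rfl
    have e1 : (B + B) 1 = B 1 + B 1 := rfl
    have e2 : (B + B) 2 = B 2 + B 2 := rfl
    omega
  have key : coeff (B + B) Motzkin = ∑ i, (coeff B (g i))^2 := by
    rw [← hs, coeff_sum]
    refine Finset.sum_congr rfl fun i _ => ?_
    rw [sq, coeff_mul]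
    rw [Finset.sum_eq_single_of_mem (B, B)]
    · rw [sq]
    · rw [Finset.HasAntidiagonal.mem_antidiagonal]
    · rintro ⟨β, γ⟩ hmem hne
      have hadd : β + γ = B + B := Finset.HasAntidiagonal.mem_antidiagonal.mp hmem
      by_cases hβ0 : coeff β (g i) = 0
      · simp [hβ0]
      by_cases hγ0 : coeff γ (g i) = 0
      · simp [hγ0]
      exfalso
      apply hne
      have hβsup : β ∈ (g i).support := mem_support_iff.mpr hβ0
      have hγsup : γ ∈ (g i).support := mem_support_iff.mpr hγ0
      have dβ : β 0 + β 1 + β 2 ≤ (g i).totalDegree := by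
        rw [← degf_eq]; exact le_totalDegree hβsup
      have dγ : γ 0 + γ 1 + γ 2 ≤ (g i).totalDegree := by
        rw [← degf_eq]; exact le_totalDegree hγsup
      have dle : (g i).totalDegree ≤ D := by
        rw [hD]; exact Finset.le_sup (f := fun i => (g i).totalDegree) (Finset.mem_univ i)
      have e0 : β 0 + γ 0 = B 0 + B 0 := by
        have := DFunLike.congr_fun hadd 0; simpa [Finsupp.add_apply] using this
      have e1 : β 1 + γ 1 = B 1 + B 1 := by
        have := DFunLike.congr_fun hadd 1; simpa [Finsupp.add_apply] using this
      have e2 : β 2 + γ 2 = B 2 + B 2 := by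
        have := DFunLike.congr_fun hadd 2; simpa [Finsupp.add_apply] using this
      have hβD : β 0 + β 1 + β 2 = D := by omega
      have hγD : γ 0 + γ 1 + γ 2 = D := by omega
      have hβS : β ∈ S := Finset.mem_filter.mpr
        ⟨Finset.mem_biUnion.mpr ⟨i, Finset.mem_univ _, hβsup⟩, hβD⟩
      have hγS : γ ∈ S := Finset.mem_filter.mpr
        ⟨Finset.mem_biUnion.mpr ⟨i, Finset.mem_univ _, hγsup⟩, hγD⟩
      have hβ0le : β 0 ≤ S.sup (fun β => β 0) := Finset.le_sup (f := fun β => β 0) hβS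
      have hγ0le : γ 0 ≤ S.sup (fun β => β 0) := Finset.le_sup (f := fun β => β 0) hγS
      have hβ0m : β 0 = B 0 := by omega
      have hγ0m : γ 0 = B 0 := by omega
      have hβS1 : β ∈ S1 := Finset.mem_filter.mpr ⟨hβS, by omega⟩
      have hγS1 : γ ∈ S1 := Finset.mem_filter.mpr ⟨hγS, by omega⟩
      have hβ1le : β 1 ≤ S1.sup (fun β => β 1) := Finset.le_sup (f := fun β => β 1) hβS1
      have hγ1le : γ 1 ≤ S1.sup (fun β => β 1) := Finset.le_sup (f := fun β => β 1) hγS1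
      have hβB : β = B := by rw [eq_E β, eq_E B, E_eq_iff]; omega
      have hγB : γ = B := by rw [eq_E γ, eq_E B, E_eq_iff]; omega
      rw [hβB, hγB]
  rw [key] at hM0
  have := (Finset.sum_eq_zero_iff_of_nonneg (fun j _ => sq_nonneg (coeff B (g j)))).mp hM0 i₂
    (Finset.mem_univ i₂)
  exact hc2 (pow_eq_zero_iff (by norm_num) |>.mp this)

lemma cascade {k : ℕ} {g : Fin k → MvPolynomial (Fin 3) ℝ}
    (hs : ∑ i, g i ^ 2 = Motzkin) : False := by
  have hd := deg_le hs
  have h300 : ∀ i, coeff (E 3 0 0) (g i) = 0 := by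
    refine step_zero hs hd (by norm_num) ?_ ?_
    · rw [coeff_M]; norm_num
    · intro i β γ e0 e1 e2 hb hg hne
      exfalso; apply hne; rw [eq_E β, E_eq_iff]; omega
  have h030 : ∀ i, coeff (E 0 3 0) (g i) = 0 := by
    refine step_zero hs hd (by norm_num) ?_ ?_
    · rw [coeff_M]; norm_num
    · intro i β γ e0 e1 e2 hb hg hne
      exfalso; apply hne; rw [eq_E β, E_eq_iff]; omega
  have h201 : ∀ i, coeff (E 2 0 1) (g i) = 0 := by
    refine step_zero hs hd (by norm_num) ?_ ?_
    · rw [coeff_M]; norm_num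
    · intro i β γ e0 e1 e2 hb hg hne
      rcases (show β 0 = 1 ∨ β 0 = 2 ∨ β 0 = 3 by omega) with h|h|h
      · have hγE : γ = E 3 0 0 := by rw [eq_E γ, E_eq_iff]; omega
        rw [hγE, h300 i, mul_zero]
      · exfalso; apply hne; rw [eq_E β, E_eq_iff]; omega
      · have hβE : β = E 3 0 0 := by rw [eq_E β, E_eq_iff]; omega
        rw [hβE, h300 i, zero_mul]
  have h021 : ∀ i, coeff (E 0 2 1) (g i) = 0 := by
    refine step_zero hs hd (by norm_num) ?_ ?_
    · rw [coeff_M]; norm_num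
    · intro i β γ e0 e1 e2 hb hg hne
      rcases (show β 1 = 1 ∨ β 1 = 2 ∨ β 1 = 3 by omega) with h|h|h
      · have hγE : γ = E 0 3 0 := by rw [eq_E γ, E_eq_iff]; omega
        rw [hγE, h030 i, mul_zero]
      · exfalso; apply hne; rw [eq_E β, E_eq_iff]; omega
      · have hβE : β = E 0 3 0 := by rw [eq_E β, E_eq_iff]; omega
        rw [hβE, h030 i, zero_mul]
  have h102 : ∀ i, coeff (E 1 0 2) (g i) = 0 := by
    refine step_zero hs hd (by norm_num) ?_ ?_
    · rw [coeff_M]; norm_num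
    · intro i β γ e0 e1 e2 hb hg hne
      rcases (show β 0 = 0 ∨ β 0 = 1 ∨ β 0 = 2 by omega) with h|h|h
      · have hγE : γ = E 2 0 1 := by rw [eq_E γ, E_eq_iff]; omega
        rw [hγE, h201 i, mul_zero]
      · exfalso; apply hne; rw [eq_E β, E_eq_iff]; omega
      · have hβE : β = E 2 0 1 := by rw [eq_E β, E_eq_iff]; omega
        rw [hβE, h201 i, zero_mul]
  have h012 : ∀ i, coeff (E 0 1 2) (g i) = 0 := by
    refine step_zero hs hd (by norm_num) ?_ ?_
    · rw [coeff_M]; norm_num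
    · intro i β γ e0 e1 e2 hb hg hne
      rcases (show β 1 = 0 ∨ β 1 = 1 ∨ β 1 = 2 by omega) with h|h|h
      · have hγE : γ = E 0 2 1 := by rw [eq_E γ, E_eq_iff]; omega
        rw [hγE, h021 i, mul_zero]
      · exfalso; apply hne; rw [eq_E β, E_eq_iff]; omega
      · have hβE : β = E 0 2 1 := by rw [eq_E β, E_eq_iff]; omega
        rw [hβE, h021 i, zero_mul]
  have hside : ∀ i, ∀ β γ : Fin 3 →₀ ℕ,
      β 0 + γ 0 = 2*1 → β 1 + γ 1 = 2*1 → β 2 + γ 2 = 2*1 →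
      β 0 + β 1 + β 2 = 3 → γ 0 + γ 1 + γ 2 = 3 →
      β ≠ E 1 1 1 →
      coeff β (g i) * coeff γ (g i) = 0 := by
    intro i β γ e0 e1 e2 hb hg hne
    have hne' : ¬ (β 0 = 1 ∧ β 1 = 1 ∧ β 2 = 1) := by
      intro hv; apply hne; rw [eq_E β, E_eq_iff]; omega
    rcases (show (β 0 = 2 ∧ β 1 = 1) ∨ (β 0 = 2 ∧ β 1 = 0) ∨ (β 0 = 1 ∧ β 1 = 2) ∨
        (β 0 = 0 ∧ β 1 = 2) ∨ (β 0 = 1 ∧ β 1 = 0) ∨ (β 0 = 0 ∧ β 1 = 1) by omega)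
      with h|h|h|h|h|h
    · have hγE : γ = E 0 1 2 := by rw [eq_E γ, E_eq_iff]; omega
      rw [hγE, h012 i, mul_zero]
    · have hβE : β = E 2 0 1 := by rw [eq_E β, E_eq_iff]; omega
      rw [hβE, h201 i, zero_mul]
    · have hγE : γ = E 1 0 2 := by rw [eq_E γ, E_eq_iff]; omega
      rw [hγE, h102 i, mul_zero]
    · have hβE : β = E 0 2 1 := by rw [eq_E β, E_eq_iff]; omega
      rw [hβE, h021 i, zero_mul]
    · have hβE : β = E 1 0 2 := by rw [eq_E β, E_eq_iff]; omega
      rw [hβE, h102 i, zero_mul]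
    · have hβE : β = E 0 1 2 := by rw [eq_E β, E_eq_iff]; omega
      rw [hβE, h012 i, zero_mul]
  have hsum := diag_step hs hd (show 1+1+1 = 3 by norm_num) hside
  have hM222 : coeff (E (2*1) (2*1) (2*1)) Motzkin = -3 := by rw [coeff_M]; norm_num
  rw [hM222] at hsum
  have hpos : 0 ≤ ∑ i, (coeff (E 1 1 1) (g i))^2 :=
    Finset.sum_nonneg fun i _ => sq_nonneg _
  linarith

/-- The Motzkin form is psd but not sos. -/
theorem motzkin_psd_not_sos : Psd Motzkin ∧ ¬ IsSos Motzkin := by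
  constructor
  · intro v
    have he : eval v Motzkin =
        (v 0)^4*(v 1)^2 + (v 0)^2*(v 1)^4 + (v 2)^6 - 3*((v 0)^2*(v 1)^2*(v 2)^2) := by
      simp [Motzkin]
    rw [he]
    by_cases h : v 0 = 0 ∧ v 1 = 0
    · rw [h.1, h.2]
      ring_nf
      positivity
    · have hpos : 0 < (v 0)^2 + (v 1)^2 := by
        rcases not_and_or.mp h with h'|h' <;> positivity
      nlinarith [sq_nonneg (v 0*v 1*((v 0)^2+(v 1)^2-2*(v 2)^2)),
        sq_nonneg (v 0*v 2*((v 2)^2-(v 1)^2)), sq_nonneg (v 1*v 2*((v 2)^2-(v 0)^2)),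
        hpos, sq_nonneg (v 0*v 1), sq_nonneg (v 2)]
  · rintro ⟨k, g, hsos⟩
    exact cascade hsos.symm
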